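/- arXiv:math/0011239 — 3 statements merged into one kernel-verified Lean document; each statement's English description precedes it below -/
import Mathlib

section
/- Let n ≥ 1 and B ≥ 2 be integers. The function E : Δ_n → ℝ is lower semi-continuous: if x_i ∈ Δ_n and x_i → x as i → ∞, then E(x) ≤ liminf_{i→∞} E(x_i). -/
open Finset Filter

/-- The extremal function
`E(x) = min{ Σ m(j) x(j) : m(j) ∈ ℕ, Σ sgn(x(j)) B^{-m(j)} ≤ 1 }`. -/
noncomputable def Efun (n B : ℕ) (x : Fin (n + 1) → ℝ) : ℝ :=
  sInf { s : ℝ | ∃ m : Fin (n + 1) → ℕ,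
    (∑ j, Real.sign (x j) * ((B : ℝ) ^ (m j))⁻¹) ≤ 1 ∧
    s = ∑ j, (m j : ℝ) * x j }

/- If `c • x ≤ y` coordinatewise for some `c > 0`, then `supp x ⊆ supp y`, so every exponent
vector admissible for `y` is admissible for `x`, and comparing the objective sums gives
`c * E(x) ≤ E(y)`. For every `c < 1` this comparison holds at all points of the sequence close
enough to `x`, hence `c * E(x) ≤ liminf E(xᵢ)`; letting `c → 1` gives the claim. The liminf is
a genuine one because `E ≤ n + 1` on the simplex, witnessed by the constant exponent `n + 1`. -/

def Admissible {ι : Type*} [Fintype ι] (B : ℕ) (x : ι → ℝ) (m : ι → ℕ) : Prop :=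
  ∑ j, Real.sign (x j) * ((B : ℝ) ^ m j)⁻¹ ≤ 1

lemma Real.sign_le_one (r : ℝ) : Real.sign r ≤ 1 := by
  rcases Real.sign_apply_eq r with h | h | h <;> rw [h] <;> norm_num

lemma Real.sign_le_sign_of_mul_le {a b c : ℝ} (ha : 0 ≤ a) (hc : 0 < c) (hab : c * a ≤ b) :
    Real.sign a ≤ Real.sign b := by
  rcases ha.eq_or_lt with rfl | ha
  · have hb : 0 ≤ b := by simpa using hab
    rcases hb.eq_or_lt with rfl | hb
    · exact le_rfl
    · rw [Real.sign_zero, Real.sign_of_pos hb]; exact zero_le_one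
  · rw [Real.sign_of_pos ha, Real.sign_of_pos ((mul_pos hc ha).trans_le hab)]

section Admissible

variable {ι : Type*} [Fintype ι] {B : ℕ}

lemma Admissible.of_sign_le {x y : ι → ℝ} {m : ι → ℕ}
    (hxy : ∀ j, Real.sign (x j) ≤ Real.sign (y j)) (hm : Admissible B y m) :
    Admissible B x m :=
  (sum_le_sum fun j _ => mul_le_mul_of_nonneg_right (hxy j) (by positivity)).trans hm

lemma admissible_const_card (hB : 2 ≤ B) (x : ι → ℝ) :
    Admissible B x (fun _ => Fintype.card ι) := by
  set N := Fintype.card ι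
  have hN : (N : ℝ) < (B : ℝ) ^ N := by exact_mod_cast Nat.lt_pow_self hB
  calc ∑ j, Real.sign (x j) * ((B : ℝ) ^ N)⁻¹
      ≤ ∑ _j : ι, 1 * ((B : ℝ) ^ N)⁻¹ :=
        sum_le_sum fun j _ => mul_le_mul_of_nonneg_right (Real.sign_le_one _) (by positivity)
    _ = N * ((B : ℝ) ^ N)⁻¹ := by simp [N]
    _ ≤ 1 := by rw [mul_inv_le_iff₀ (by positivity), one_mul]; exact hN.le

end Admissible

section Efun

variable {n B : ℕ}

lemma Efun_le_of_admissible {x : Fin (n + 1) → ℝ} (hx : ∀ j, 0 ≤ x j) {m : Fin (n + 1) → ℕ}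
    (hm : Admissible B x m) : Efun n B x ≤ ∑ j, (m j : ℝ) * x j :=
  csInf_le ⟨0, by rintro _ ⟨m, -, rfl⟩; exact sum_nonneg fun j _ => by have := hx j; positivity⟩
    ⟨m, hm, rfl⟩

lemma le_Efun_of_forall_admissible (hB : 2 ≤ B) {y : Fin (n + 1) → ℝ} {a : ℝ}
    (h : ∀ m, Admissible B y m → a ≤ ∑ j, (m j : ℝ) * y j) : a ≤ Efun n B y :=
  le_csInf ⟨_, _, admissible_const_card hB y, rfl⟩ fun _ ⟨m, hm, hs⟩ => hs ▸ h m hm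

lemma Efun_le_of_mem_stdSimplex (hB : 2 ≤ B) {x : Fin (n + 1) → ℝ}
    (hx : x ∈ stdSimplex ℝ (Fin (n + 1))) : Efun n B x ≤ n + 1 :=
  calc Efun n B x ≤ ∑ j, ((Fintype.card (Fin (n + 1)) : ℕ) : ℝ) * x j :=
        Efun_le_of_admissible hx.1 (admissible_const_card hB x)
    _ = n + 1 := by rw [← mul_sum, hx.2]; simp

lemma mul_Efun_le_Efun (hB : 2 ≤ B) {x y : Fin (n + 1) → ℝ} (hx : ∀ j, 0 ≤ x j) {c : ℝ}
    (hc : 0 < c) (hxy : ∀ j, c * x j ≤ y j) : c * Efun n B x ≤ Efun n B y := by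
  refine le_Efun_of_forall_admissible hB fun m hm => ?_
  have hmx : Admissible B x m :=
    hm.of_sign_le fun j => Real.sign_le_sign_of_mul_le (hx j) hc (hxy j)
  calc c * Efun n B x ≤ c * ∑ j, (m j : ℝ) * x j :=
        mul_le_mul_of_nonneg_left (Efun_le_of_admissible hx hmx) hc.le
    _ = ∑ j, (m j : ℝ) * (c * x j) := by rw [mul_sum]; congr! 1 with j; ring
    _ ≤ ∑ j, (m j : ℝ) * y j := sum_le_sum fun j _ => by gcongr; exact hxy j

end Efun

lemma eventually_mul_le_of_tendsto {ι α : Type*} [Finite ι] {l : Filter α} {ys : α → ι → ℝ}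
    {x : ι → ℝ} (hys : ∀ i j, 0 ≤ ys i j) (hx : ∀ j, 0 ≤ x j) (hlim : Tendsto ys l (nhds x))
    {c : ℝ} (hc : c < 1) : ∀ᶠ i in l, ∀ j, c * x j ≤ ys i j := by
  refine eventually_all.2 fun j => ?_
  rcases (hx j).eq_or_lt with hxj | hxj
  · exact Eventually.of_forall fun i => by rw [← hxj, mul_zero]; exact hys i j
  · have hcx : c * x j < x j := by nlinarith
    exact (tendsto_pi_nhds.1 hlim j).eventually (eventually_ge_nhds hcx)

theorem stmt6_general (n B : ℕ) (hB : 2 ≤ B)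
    (xs : ℕ → (Fin (n + 1) → ℝ)) (x : Fin (n + 1) → ℝ)
    (hxs : ∀ i, xs i ∈ stdSimplex ℝ (Fin (n + 1)))
    (hx : x ∈ stdSimplex ℝ (Fin (n + 1)))
    (hlim : Tendsto xs atTop (nhds x)) :
    Efun n B x ≤ liminf (fun i => Efun n B (xs i)) atTop := by
  have hbdd : IsBoundedUnder (· ≤ ·) atTop fun i => Efun n B (xs i) :=
    isBoundedUnder_of ⟨n + 1, fun i => Efun_le_of_mem_stdSimplex hB (hxs i)⟩
  have hscaled : ∀ c ∈ Set.Ioo (0 : ℝ) 1,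
      c * Efun n B x ≤ liminf (fun i => Efun n B (xs i)) atTop := fun c hc =>
    le_liminf_of_le hbdd.isCoboundedUnder_ge <|
      (eventually_mul_le_of_tendsto (fun i => (hxs i).1) hx.1 hlim hc.2).mono fun i hi =>
        mul_Efun_le_Efun hB hx.1 hc.1 hi
  have hlim_one : Tendsto (fun c : ℝ => c * Efun n B x) (nhdsWithin 1 (Set.Iio 1))
      (nhds (Efun n B x)) := by
    simpa using ((tendsto_id (x := nhds (1 : ℝ))).mul_const (Efun n B x)).mono_left
      nhdsWithin_le_nhds
  exact le_of_tendsto hlim_one (eventually_of_mem (Ioo_mem_nhdsLT one_pos) hscaled)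

theorem stmt6 (n B : ℕ) (hn : 1 ≤ n) (hB : 2 ≤ B)
    (xs : ℕ → (Fin (n + 1) → ℝ)) (x : Fin (n + 1) → ℝ)
    (hxs : ∀ i, xs i ∈ stdSimplex ℝ (Fin (n + 1)))
    (hx : x ∈ stdSimplex ℝ (Fin (n + 1)))
    (hlim : Tendsto xs atTop (nhds x)) :
    Efun n B x ≤ liminf (fun i => Efun n B (xs i)) atTop :=
  stmt6_general n B hB xs x hxs hx hlim
end

section
/- Let n ≥ 1 and B ≥ 2 be integers. The maximum of E over Δ_n equals κ(n,B) = ⌊log_B n⌋ + ⌈B(n + 1 − B^{⌊log_B n⌋})/(B − 1)⌉ / (n + 1). -/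
/-!
Write `N = n + 1`, `L = ⌊log_B n⌋` and `q = ⌈B(N - B^L)/(B - 1)⌉`, so that `κ(n,B) = L + q/N`.
The code with `q` words of length `L + 1` and `N - q` words of length `L` satisfies Kraft's
inequality because `q ≥ B(N - B^L)/(B - 1)`. Giving its short words to the largest coordinates
of `x`, Chebyshev's sum inequality bounds `E(x)` by the average length `L + q/N`.
Conversely, summing the chord bound `B^d ≥ 1 + (B - 1)d` (`d ∈ ℤ`) at `d = L + 1 - m(j)` turns
Kraft's inequality into `(B - 1)(Σ m(j) - NL) ≥ B(N - B^L)`. By integrality every admissible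
`m` then has `Σ m(j) ≥ NL + q`, so `E` equals `κ` at the uniform point.
-/

open Finset

/-- `κ(n,B) = ⌊log_B n⌋ + ⌈B(n+1-B^⌊log_B n⌋)/(B-1)⌉/(n+1)`. -/
noncomputable def kappa (n B : ℕ) : ℝ :=
  (⌊Real.logb B n⌋ : ℝ) +
    (⌈(B : ℝ) * ((n : ℝ) + 1 - (B : ℝ) ^ (⌊Real.logb B n⌋ : ℤ)) / ((B : ℝ) - 1)⌉ : ℝ) /
      ((n : ℝ) + 1)

lemma one_add_sub_one_mul_le_zpow {b : ℝ} (hb : 2 ≤ b) (d : ℤ) : 1 + (b - 1) * d ≤ b ^ d := by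
  rcases le_or_gt 0 d with hd | hd
  · lift d to ℕ using hd
    rw [zpow_natCast, Int.cast_natCast]
    linarith [one_add_mul_sub_le_pow (by linarith : -1 ≤ b) d]
  · have hd' : (d : ℝ) ≤ -1 := by exact_mod_cast Int.le_sub_one_of_lt hd
    have : 0 < b ^ d := zpow_pos (by linarith) d
    nlinarith

section Kraft

variable {ι : Type*} [Fintype ι] {b : ℝ}

lemma mul_card_sub_pow_le_of_sum_inv_pow_le_one (hb : 2 ≤ b) {m : ι → ℕ}
    (hm : ∑ i, (b ^ m i)⁻¹ ≤ 1) (L : ℕ) :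
    b * (Fintype.card ι - b ^ L) ≤ (b - 1) * (∑ i, (m i : ℝ) - Fintype.card ι * L) := by
  have hchord (i : ι) : 1 + (b - 1) * ((L : ℝ) + 1 - m i) ≤ b ^ (L + 1) * (b ^ m i)⁻¹ := by
    have h := one_add_sub_one_mul_le_zpow hb ((L : ℤ) + 1 - m i)
    rw [zpow_sub₀ (by positivity), ← Nat.cast_succ, zpow_natCast, zpow_natCast] at h
    push_cast at h
    rwa [div_eq_mul_inv] at h
  have hsum := calc
    ∑ i, (1 + (b - 1) * ((L : ℝ) + 1 - m i)) ≤ ∑ i, b ^ (L + 1) * (b ^ m i)⁻¹ :=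
      sum_le_sum fun i _ => hchord i
    _ ≤ b ^ (L + 1) := by rw [← mul_sum]; exact mul_le_of_le_one_right (by positivity) hm
  simp only [sum_add_distrib, ← mul_sum, sum_sub_distrib, sum_const, card_univ,
    nsmul_eq_mul] at hsum
  rw [pow_succ] at hsum
  linear_combination hsum

lemma ceil_add_card_mul_le_sum_of_sum_inv_pow_le_one (hb : 2 ≤ b) {m : ι → ℕ}
    (hm : ∑ i, (b ^ m i)⁻¹ ≤ 1) (L : ℕ) :
    ⌈b * (Fintype.card ι - b ^ L) / (b - 1)⌉ + Fintype.card ι * L ≤ ∑ i, (m i : ℤ) := by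
  rw [← le_sub_iff_add_le, Int.ceil_le, div_le_iff₀ (by linarith)]
  push_cast
  linarith [mul_card_sub_pow_le_of_sum_inv_pow_le_one hb hm L]

end Kraft

def twoLevelCode (N L q : ℕ) : Fin N → ℕ := fun i => if (i : ℕ) < q then L + 1 else L

section TwoLevelCode

variable {N L q : ℕ}

lemma twoLevelCode_antitone : Antitone (twoLevelCode N L q) := by
  intro i j hij
  rw [Fin.le_def] at hij
  simp only [twoLevelCode]
  split_ifs <;> omega

lemma sum_twoLevelCode_comp {M : Type*} [AddCommMonoid M] (hq : q ≤ N) (f : ℕ → M) :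
    ∑ i, f (twoLevelCode N L q i) = q • f (L + 1) + (N - q) • f L := by
  have hlong : ∀ i ∈ range q, f (if i < q then L + 1 else L) = f (L + 1) :=
    fun i hi => by rw [if_pos (mem_range.mp hi)]
  have hshort : ∀ i ∈ Ico q N, f (if i < q then L + 1 else L) = f L :=
    fun i hi => by rw [if_neg (mem_Ico.mp hi).1.not_gt]
  simp only [twoLevelCode]
  rw [Fin.sum_univ_eq_sum_range (fun i => f (if i < q then L + 1 else L)),
    ← sum_range_add_sum_Ico _ hq, sum_congr rfl hlong, sum_congr rfl hshort]
  simp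

lemma sum_twoLevelCode (hq : q ≤ N) : ∑ i, (twoLevelCode N L q i : ℝ) = N * L + q := by
  rw [sum_twoLevelCode_comp hq (fun k => (k : ℝ)), nsmul_eq_mul, nsmul_eq_mul,
    Nat.cast_sub hq]
  push_cast
  ring

lemma sum_inv_pow_twoLevelCode_le_one {b : ℝ} (hb : 1 < b) (hq : q ≤ N)
    (h : b * (N - b ^ L) / (b - 1) ≤ q) : ∑ i, (b ^ twoLevelCode N L q i)⁻¹ ≤ 1 := by
  rw [div_le_iff₀ (by linarith)] at h
  rw [sum_twoLevelCode_comp hq (fun k => (b ^ k)⁻¹), nsmul_eq_mul, nsmul_eq_mul,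
    Nat.cast_sub hq]
  calc (q : ℝ) * (b ^ (L + 1))⁻¹ + (N - q) * (b ^ L)⁻¹ = (q + (N - q) * b) / b ^ (L + 1) := by
        field_simp; ring
    _ ≤ 1 := by
      rw [div_le_one (by positivity), pow_succ]
      linear_combination h

end TwoLevelCode

lemma antivary_comp_symm_sort {N : ℕ} {α β : Type*} [Preorder α] [LinearOrder β]
    {c : Fin N → α} (hc : Antitone c) (x : Fin N → β) :
    Antivary (c ∘ (Tuple.sort x).symm) x := by
  simpa [Function.comp_assoc] using
    (hc.antivary (Tuple.monotone_sort x)).comp_right (Tuple.sort x).symm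

section Efun

variable {n B : ℕ} {x : Fin (n + 1) → ℝ}

lemma Efun_le_sum_mul (hx : ∀ j, 0 ≤ x j) {m : Fin (n + 1) → ℕ}
    (hm : ∑ j, ((B : ℝ) ^ m j)⁻¹ ≤ 1) : Efun n B x ≤ ∑ j, (m j : ℝ) * x j := by
  refine csInf_le ⟨0, ?_⟩ ⟨m, (sum_le_sum fun j _ => ?_).trans hm, rfl⟩
  · rintro _ ⟨m', -, rfl⟩
    exact sum_nonneg fun j _ => mul_nonneg (m' j).cast_nonneg (hx j)
  · refine mul_le_of_le_one_left (by positivity) ?_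
    rcases Real.sign_apply_eq (x j) with h | h | h <;> rw [h] <;> norm_num

lemma Efun_le_sum_div {c : Fin (n + 1) → ℕ} (hc : Antitone c)
    (hc_kraft : ∑ j, ((B : ℝ) ^ c j)⁻¹ ≤ 1) (hx : x ∈ stdSimplex ℝ (Fin (n + 1))) :
    Efun n B x ≤ (∑ j, (c j : ℝ)) / (n + 1) := by
  set σ := Tuple.sort x
  have hcheb :=
    (antivary_comp_symm_sort (Nat.mono_cast.comp_antitone hc) x).card_mul_sum_le_sum_mul_sum
  simp only [Fintype.card_fin, hx.2, mul_one, Function.comp_apply] at hcheb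
  rw [Equiv.sum_comp σ.symm fun i => (c i : ℝ)] at hcheb
  calc Efun n B x ≤ ∑ j, (c (σ.symm j) : ℝ) * x j :=
        Efun_le_sum_mul hx.1 (by rwa [Equiv.sum_comp σ.symm fun i => ((B : ℝ) ^ c i)⁻¹])
    _ ≤ _ := by
      rw [le_div_iff₀ (by positivity)]
      push_cast at hcheb
      linarith

lemma le_Efun_of_forall (hx : ∀ j, 0 < x j) {a : ℝ}
    (hne : ∃ m : Fin (n + 1) → ℕ, ∑ j, ((B : ℝ) ^ m j)⁻¹ ≤ 1)
    (h : ∀ m : Fin (n + 1) → ℕ, ∑ j, ((B : ℝ) ^ m j)⁻¹ ≤ 1 → a ≤ ∑ j, (m j : ℝ) * x j) :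
    a ≤ Efun n B x := by
  have hsign (j) : Real.sign (x j) = 1 := Real.sign_of_pos (hx j)
  obtain ⟨m₀, hm₀⟩ := hne
  refine le_csInf ⟨_, m₀, by simpa [hsign] using hm₀, rfl⟩ ?_
  rintro _ ⟨m, hm, rfl⟩
  exact h m (by simpa [hsign] using hm)

end Efun

section Kappa

variable {n B : ℕ}

lemma mul_sub_pow_log_div_mem_Icc (hB : 2 ≤ B) :
    (B : ℝ) * (n + 1 - B ^ Nat.log B n) / (B - 1) ∈ Set.Icc 0 ((n : ℝ) + 1) := by
  have hB' : (2 : ℝ) ≤ B := by exact_mod_cast hB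
  have hlow : (B : ℝ) ^ Nat.log B n ≤ n + 1 := by exact_mod_cast Nat.pow_log_le_add_one B n
  have hhigh : (n : ℝ) + 1 ≤ B ^ Nat.log B n * B := by
    exact_mod_cast (pow_succ B _ ▸ Nat.lt_pow_succ_log_self hB n)
  refine ⟨div_nonneg (mul_nonneg (by linarith) (by linarith)) (by linarith), ?_⟩
  rw [div_le_iff₀ (by linarith)]
  linarith

lemma kappa_eq_log_add_ceil_div (hB : 2 ≤ B) :
    kappa n B = Nat.log B n + ⌈(B : ℝ) * (n + 1 - B ^ Nat.log B n) / (B - 1)⌉₊ / (n + 1) := by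
  rw [kappa, Real.floor_logb_natCast n.cast_nonneg, Int.log_natCast, zpow_natCast,
    ← Int.natCast_ceil_eq_ceil (mul_sub_pow_log_div_mem_Icc hB).1]
  push_cast
  rfl

lemma add_ceil_le_sum_of_sum_inv_pow_le_one (hB : 2 ≤ B) {m : Fin (n + 1) → ℕ}
    (hm : ∑ j, ((B : ℝ) ^ m j)⁻¹ ≤ 1) :
    (n + 1) * Nat.log B n + ⌈(B : ℝ) * (n + 1 - B ^ Nat.log B n) / (B - 1)⌉₊ ≤ ∑ j, (m j : ℝ) := by
  have hlen := ceil_add_card_mul_le_sum_of_sum_inv_pow_le_one (by exact_mod_cast hB) hm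
    (Nat.log B n)
  simp only [Fintype.card_fin] at hlen
  push_cast at hlen
  rw [← Int.natCast_ceil_eq_ceil (mul_sub_pow_log_div_mem_Icc hB).1] at hlen
  replace hlen := (Int.cast_le (R := ℝ)).2 hlen
  push_cast at hlen
  linarith

end Kappa

theorem stmt14_general (n B : ℕ) (hB : 2 ≤ B) :
    IsGreatest (Efun n B '' stdSimplex ℝ (Fin (n + 1))) (kappa n B) := by
  set L := Nat.log B n
  set T : ℝ := B * (n + 1 - B ^ L) / (B - 1)
  obtain ⟨-, hTN⟩ : T ∈ Set.Icc 0 ((n : ℝ) + 1) := mul_sub_pow_log_div_mem_Icc hB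
  have hκ : kappa n B = L + ⌈T⌉₊ / (n + 1) := kappa_eq_log_add_ceil_div hB
  have hq : ⌈T⌉₊ ≤ n + 1 := Nat.ceil_le.2 (by rwa [Nat.cast_succ])
  set c := twoLevelCode (n + 1) L ⌈T⌉₊
  have hc_kraft : ∑ j, ((B : ℝ) ^ c j)⁻¹ ≤ 1 :=
    sum_inv_pow_twoLevelCode_le_one (Nat.one_lt_cast.2 hB) hq (by push_cast; exact Nat.le_ceil T)
  have upper (x) (hx : x ∈ stdSimplex ℝ (Fin (n + 1))) : Efun n B x ≤ kappa n B := by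
    refine (Efun_le_sum_div twoLevelCode_antitone hc_kraft hx).trans_eq ?_
    rw [hκ, sum_twoLevelCode hq]
    field_simp
    push_cast
    ring
  set u : Fin (n + 1) → ℝ := fun _ => ((n : ℝ) + 1)⁻¹
  have hu : u ∈ stdSimplex ℝ (Fin (n + 1)) := ⟨fun _ => by positivity, by simp [u]; field_simp⟩
  refine ⟨⟨u, hu, (upper u hu).antisymm (le_Efun_of_forall (fun _ => by positivity)
    ⟨c, hc_kraft⟩ fun m hm => ?_)⟩, fun _ ⟨x, hx, hEx⟩ => hEx ▸ upper x hx⟩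
  rw [hκ, ← sum_mul, ← div_eq_mul_inv, le_div_iff₀ (by positivity), add_mul,
    div_mul_cancel₀ _ (by positivity)]
  linarith [add_ceil_le_sum_of_sum_inv_pow_le_one hB hm]

theorem stmt14 (n B : ℕ) (hn : 1 ≤ n) (hB : 2 ≤ B) :
    IsGreatest (Efun n B '' stdSimplex ℝ (Fin (n + 1))) (kappa n B) :=
  stmt14_general n B hB
end

section
/- Let n ≥ 1 and B ≥ 2 be integers. The constant κ(n,B) in the stability theorem is best possible: there exists a function f on the convex set Δ_n ⊆ ℝ^{n+1} that is approximately convex with respect to Δ_{B-1} (namely f = E) such that for every convex function g : Δ_n → ℝ with g(x) ≤ f(x) for all x ∈ Δ_n, one has sup_{x∈Δ_n} (f(x) − g(x)) ≥ κ(n,B), where κ(n,B) = ⌊log_B n⌋ + ⌈B(n + 1 − B^{⌊log_B n⌋})/(B − 1)⌉ / (n + 1). -/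
open Finset

/-- `f` is approximately convex with respect to `Δ_{B-1}` on the convex set `U`,
with tolerance `ε`. -/
def ApproxConvexWrt {V : Type*} [AddCommMonoid V] [Module ℝ V]
    (B : ℕ) (U : Set V) (f : V → ℝ) (ε : ℝ) : Prop :=
  ∀ (x : Fin B → V) (t : Fin B → ℝ),
    (∀ i, x i ∈ U) → (∀ i, 0 ≤ t i) → (∑ i, t i) = 1 →
    f (∑ i, t i • x i) ≤ (∑ i, t i * f (x i)) + ε

/-!
`E x` is the least expected length of a `B`-ary prefix code for the distribution `x`, Kraft's
inequality describing the admissible length vectors `m`.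

Approximate convexity: given codes `mᵢ` for `x₁, …, x_B`, give each symbol one digit more than its
shortest codeword among the `mᵢ`. This is admissible for `∑ tᵢ xᵢ` (its Kraft sum is at most
`B⁻¹ * B`) and its expected length exceeds `∑ tᵢ ⟨mᵢ, xᵢ⟩` by at most `1`.

Sharpness: `E` vanishes at the vertices, so a convex minorant `g` is `≤ 0` on the simplex. At the
barycentre, the Bernoulli inequality `1 + j (b - 1) ≤ b ^ j` for integer `j` is tight at
`j = 0, 1`; applied to `j = ℓ + 1 - m j` and summed against Kraft's inequality, it bounds the total
length `∑ m j` below for every integer `ℓ`. Since `∑ m j` is an integer, the bound may be rounded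
up, and `ℓ = ⌊log_B n⌋` gives `κ(n, B)`.
-/

lemma one_add_mul_sub_le_zpow {b : ℝ} (hb : 0 < b) (j : ℤ) : 1 + j * (b - 1) ≤ b ^ j := by
  obtain ⟨n, rfl | rfl⟩ := j.eq_nat_or_neg
  · simpa using one_add_mul_sub_le_pow (by linarith : -1 ≤ b) n
  · have hinv : 1 - b ≤ b⁻¹ - 1 := by
      have : 0 ≤ (b - 1) ^ 2 / b := by positivity
      have e : (b - 1) ^ 2 / b = b⁻¹ - 1 - (1 - b) := by field_simp; ring
      linarith
    have := one_add_mul_sub_le_pow (by have := inv_pos.2 hb; linarith : -1 ≤ b⁻¹) n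
    rw [zpow_neg, zpow_natCast, ← inv_pow]
    push_cast
    linarith [mul_le_mul_of_nonneg_left hinv (n.cast_nonneg : (0 : ℝ) ≤ n)]

lemma le_sum_of_sum_inv_pow_le_one {ι : Type*} [Fintype ι] {b : ℝ} (hb : 1 < b) (ℓ : ℤ)
    {m : ι → ℕ} (hm : ∑ j, (b ^ m j)⁻¹ ≤ 1) :
    Fintype.card ι * ℓ + b * (Fintype.card ι - b ^ ℓ) / (b - 1) ≤ ∑ j, (m j : ℝ) := by
  have hb0 : 0 < b := by linarith
  have hterm : ∀ j, b - b ^ (ℓ + 1) * (b ^ m j)⁻¹ ≤ (m j - ℓ) * (b - 1) := fun j => by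
    have := one_add_mul_sub_le_zpow hb0 (ℓ + 1 - m j)
    rw [zpow_sub₀ hb0.ne', zpow_natCast, div_eq_mul_inv] at this
    push_cast at this
    linarith
  have hsum := sum_le_sum fun j (_ : j ∈ univ) => hterm j
  rw [sum_sub_distrib, ← mul_sum, ← sum_mul, sum_sub_distrib] at hsum
  simp only [sum_const, card_univ, nsmul_eq_mul] at hsum
  have hpow : b ^ (ℓ + 1) * ∑ j, (b ^ m j)⁻¹ ≤ b ^ (ℓ + 1) := by
    simpa using mul_le_mul_of_nonneg_left hm (by positivity : (0 : ℝ) ≤ b ^ (ℓ + 1))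
  rw [zpow_add_one₀ hb0.ne'] at hsum hpow
  rw [← le_sub_iff_add_le', div_le_iff₀ (by linarith)]
  linarith

section CodeLength

variable {ι : Type*} [Fintype ι] {B : ℕ}

noncomputable def kraftSum (B : ℕ) (x : ι → ℝ) (m : ι → ℕ) : ℝ :=
  ∑ j, if x j = 0 then 0 else ((B : ℝ) ^ m j)⁻¹

def codeLength (m : ι → ℕ) (x : ι → ℝ) : ℝ :=
  ∑ j, (m j : ℝ) * x j

/-- The function `E` of the statement; `kraftSum B x m` is `∑ j, sgn (x j) * B ^ (-m j)`. -/
noncomputable def minCodeLength (B : ℕ) (x : ι → ℝ) : ℝ :=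
  sInf ((codeLength · x) '' {m | kraftSum B x m ≤ 1})

lemma kraftSum_const_card_le_one (hB : 2 ≤ B) (x : ι → ℝ) :
    kraftSum B x (fun _ => Fintype.card ι) ≤ 1 := by
  have hcard : (Fintype.card ι : ℝ) ≤ (B : ℝ) ^ Fintype.card ι := by
    exact_mod_cast (Nat.lt_pow_self (by omega)).le
  calc kraftSum B x (fun _ => Fintype.card ι)
      ≤ ∑ _j : ι, ((B : ℝ) ^ Fintype.card ι)⁻¹ :=
        sum_le_sum fun j _ => by split_ifs <;> first | positivity | rfl
    _ = Fintype.card ι * ((B : ℝ) ^ Fintype.card ι)⁻¹ := by simp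
    _ ≤ 1 := by
        rw [← div_eq_mul_inv]
        exact div_le_one_of_le₀ hcard (by positivity)

lemma nonempty_codeLengths (hB : 2 ≤ B) (x : ι → ℝ) :
    ((codeLength · x) '' {m | kraftSum B x m ≤ 1}).Nonempty :=
  ⟨_, _, kraftSum_const_card_le_one hB x, rfl⟩

lemma codeLength_nonneg {x : ι → ℝ} (hx : ∀ j, 0 ≤ x j) (m : ι → ℕ) : 0 ≤ codeLength m x :=
  sum_nonneg fun j _ => mul_nonneg (Nat.cast_nonneg _) (hx j)

lemma minCodeLength_le {x : ι → ℝ} (hx : ∀ j, 0 ≤ x j) {m : ι → ℕ}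
    (hm : kraftSum B x m ≤ 1) : minCodeLength B x ≤ codeLength m x :=
  csInf_le ⟨0, by rintro _ ⟨m', -, rfl⟩; exact codeLength_nonneg hx m'⟩ ⟨m, hm, rfl⟩

lemma le_minCodeLength (hB : 2 ≤ B) {x : ι → ℝ} {a : ℝ}
    (h : ∀ m, kraftSum B x m ≤ 1 → a ≤ codeLength m x) : a ≤ minCodeLength B x :=
  le_csInf (nonempty_codeLengths hB x) <| by
    rintro _ ⟨m, hm, rfl⟩
    exact h m hm

lemma exists_codeLength_lt (hB : 2 ≤ B) (x : ι → ℝ) {ε : ℝ} (hε : 0 < ε) :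
    ∃ m, kraftSum B x m ≤ 1 ∧ codeLength m x < minCodeLength B x + ε := by
  obtain ⟨_, ⟨m, hm, rfl⟩, hlt⟩ :=
    Real.lt_sInf_add_pos (nonempty_codeLengths hB x) hε
  exact ⟨m, hm, hlt⟩

lemma minCodeLength_single_le_zero [DecidableEq ι] (i : ι) :
    minCodeLength B (Pi.single i 1) ≤ 0 := by
  have hm : kraftSum B (Pi.single i (1 : ℝ)) 0 ≤ 1 := by
    simp [kraftSum, Pi.single_apply]
  simpa [codeLength] using minCodeLength_le (fun j => (single_mem_stdSimplex ℝ i).1 j) hm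

section Merge

variable {κ : Type*} [Fintype κ] (x : κ → ι → ℝ) (m : κ → ι → ℕ)

noncomputable def mergeCode (j : ι) : ℕ :=
  1 + sInf ((m · j) '' {i | x i j ≠ 0})

lemma kraftSum_mergeCode_le (t : κ → ℝ) :
    kraftSum B (∑ i, t i • x i) (mergeCode x m) ≤ (B : ℝ)⁻¹ * ∑ i, kraftSum B (x i) (m i) := by
  simp only [kraftSum, mul_sum]
  rw [sum_comm]
  refine sum_le_sum fun j _ => ?_
  split_ifs with hy
  · exact sum_nonneg fun i _ => by split_ifs <;> positivity
  obtain ⟨i, hi⟩ : ∃ i, x i j ≠ 0 := by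
    by_contra! h
    simp [h] at hy
  obtain ⟨i₀, hi₀, hmin⟩ :=
    Nat.sInf_mem ((show {i | x i j ≠ 0}.Nonempty from ⟨i, hi⟩).image (m · j))
  have hterm : ∀ i ∈ univ, 0 ≤ (B : ℝ)⁻¹ * if x i j = 0 then 0 else ((B : ℝ) ^ m i j)⁻¹ :=
    fun i _ => by split_ifs <;> positivity
  calc ((B : ℝ) ^ mergeCode x m j)⁻¹ = (B : ℝ)⁻¹ * ((B : ℝ) ^ m i₀ j)⁻¹ := by
        rw [mergeCode, ← hmin, pow_add, pow_one, mul_inv]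
    _ = (B : ℝ)⁻¹ * if x i₀ j = 0 then 0 else ((B : ℝ) ^ m i₀ j)⁻¹ := by rw [if_neg hi₀]
    _ ≤ _ := single_le_sum hterm (mem_univ i₀)

lemma codeLength_mergeCode_le {t : κ → ℝ} (ht : ∀ i, 0 ≤ t i) (hx : ∀ i j, 0 ≤ x i j) :
    codeLength (mergeCode x m) (∑ i, t i • x i)
      ≤ ∑ j, (∑ i, t i • x i) j + ∑ i, t i * codeLength (m i) (x i) := by
  have hy : ∀ j, (∑ i, t i • x i) j = ∑ i, t i * x i j := fun j => by simp [Finset.sum_apply]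
  simp only [codeLength, mergeCode, hy, mul_sum]
  rw [sum_comm (s := univ (α := κ)), ← sum_add_distrib]
  refine sum_le_sum fun j _ => ?_
  rw [← sum_add_distrib]
  refine sum_le_sum fun i _ => ?_
  rcases eq_or_ne (x i j) 0 with hi | hi
  · simp [hi]
  have hmin : ((sInf ((m · j) '' {i | x i j ≠ 0}) : ℕ) : ℝ) ≤ m i j :=
    Nat.cast_le.2 (Nat.sInf_le ⟨i, hi, rfl⟩)
  push_cast
  nlinarith [mul_nonneg (ht i) (hx i j)]

end Merge

lemma approxConvexWrt_minCodeLength (hB : 2 ≤ B) :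
    ApproxConvexWrt B (stdSimplex ℝ ι) (minCodeLength B) 1 := by
  intro x t hx ht hts
  have hy : ∑ i, t i • x i ∈ stdSimplex ℝ ι :=
    (convex_stdSimplex ℝ ι).sum_mem (fun i _ => ht i) hts fun i _ => hx i
  refine le_of_forall_pos_le_add fun ε hε => ?_
  choose m hm hlt using fun i => exists_codeLength_lt hB (x i) hε
  have hkraft : kraftSum B (∑ i, t i • x i) (mergeCode x m) ≤ 1 :=
    calc _ ≤ (B : ℝ)⁻¹ * ∑ i, kraftSum B (x i) (m i) := kraftSum_mergeCode_le x m t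
      _ ≤ (B : ℝ)⁻¹ * ∑ _i : Fin B, 1 := by gcongr with i; exact hm i
      _ = 1 := by simp [show (B : ℝ) ≠ 0 by positivity]
  calc minCodeLength B (∑ i, t i • x i)
      ≤ codeLength (mergeCode x m) (∑ i, t i • x i) := minCodeLength_le hy.1 hkraft
    _ ≤ ∑ j, (∑ i, t i • x i) j + ∑ i, t i * codeLength (m i) (x i) :=
        codeLength_mergeCode_le x m ht fun i => (hx i).1
    _ ≤ 1 + ∑ i, t i * (minCodeLength B (x i) + ε) := by
        rw [hy.2]
        gcongr with i
        · exact ht i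
        · exact (hlt i).le
    _ = ∑ i, t i * minCodeLength B (x i) + 1 + ε := by
        simp only [mul_add, sum_add_distrib, ← sum_mul, hts]
        ring

lemma le_minCodeLength_barycenter [Nonempty ι] (hB : 2 ≤ B) (ℓ : ℤ) :
    ℓ + ⌈(B : ℝ) * (Fintype.card ι - (B : ℝ) ^ ℓ) / (B - 1)⌉ / Fintype.card ι
      ≤ minCodeLength B (stdSimplex.barycenter : stdSimplex ℝ ι).val := by
  have hN : (0 : ℝ) < Fintype.card ι := by positivity
  refine le_minCodeLength hB fun m hm => ?_
  have hm' : ∑ j, ((B : ℝ) ^ m j)⁻¹ ≤ 1 := by simpa [kraftSum, hN.ne'] using hm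
  have hceil : ⌈(B : ℝ) * (Fintype.card ι - (B : ℝ) ^ ℓ) / (B - 1)⌉
      ≤ ∑ j, (m j : ℤ) - Fintype.card ι * ℓ := by
    rw [Int.ceil_le]
    push_cast
    linarith [le_sum_of_sum_inv_pow_le_one (by exact_mod_cast hB : (1 : ℝ) < B) ℓ hm']
  have hceil' := (Int.cast_le (R := ℝ)).2 hceil
  push_cast at hceil'
  simp only [codeLength, stdSimplex.barycenter_apply, ← sum_mul]
  rw [← sub_nonneg]
  field_simp
  linarith

end CodeLength

lemma kappa_le_minCodeLength_barycenter (n : ℕ) {B : ℕ} (hB : 2 ≤ B) :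
    kappa n B ≤ minCodeLength B (stdSimplex.barycenter : stdSimplex ℝ (Fin (n + 1))).val := by
  simpa [kappa] using le_minCodeLength_barycenter (ι := Fin (n + 1)) hB ⌊Real.logb B n⌋

theorem stmt16_general (n B : ℕ) (hB : 2 ≤ B) :
    ∃ f : (Fin (n + 1) → ℝ) → ℝ,
      ApproxConvexWrt B (stdSimplex ℝ (Fin (n + 1))) f 1 ∧
      ∀ g : (Fin (n + 1) → ℝ) → ℝ,
        ConvexOn ℝ (stdSimplex ℝ (Fin (n + 1))) g →
        (∀ x ∈ stdSimplex ℝ (Fin (n + 1)), g x ≤ f x) →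
        ∀ c : ℝ, (∀ x ∈ stdSimplex ℝ (Fin (n + 1)), f x - g x ≤ c) →
          kappa n B ≤ c := by
  refine ⟨minCodeLength B, approxConvexWrt_minCodeLength hB, fun g hg hgE c hc => ?_⟩
  set b : Fin (n + 1) → ℝ := (stdSimplex.barycenter : stdSimplex ℝ (Fin (n + 1))).val
  have hb : b ∈ stdSimplex ℝ (Fin (n + 1)) := Subtype.prop _
  have hvertices : Set.range (fun i : Fin (n + 1) => Pi.single i (1 : ℝ)) ⊆ stdSimplex ℝ _ := by
    rintro _ ⟨i, rfl⟩
    exact single_mem_stdSimplex ℝ i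
  obtain ⟨_, ⟨i, rfl⟩, hgb⟩ := hg.exists_ge_of_mem_convexHull hvertices
    (by rwa [convexHull_rangle_single_eq_stdSimplex])
  have hgb₀ : g b ≤ 0 :=
    hgb.trans <| (hgE _ (single_mem_stdSimplex ℝ i)).trans (minCodeLength_single_le_zero i)
  calc kappa n B ≤ minCodeLength B b := kappa_le_minCodeLength_barycenter n hB
    _ ≤ minCodeLength B b - g b := by linarith
    _ ≤ c := hc b hb

theorem stmt16 (n B : ℕ) (hn : 1 ≤ n) (hB : 2 ≤ B) :
    ∃ f : (Fin (n + 1) → ℝ) → ℝ,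
      ApproxConvexWrt B (stdSimplex ℝ (Fin (n + 1))) f 1 ∧
      ∀ g : (Fin (n + 1) → ℝ) → ℝ,
        ConvexOn ℝ (stdSimplex ℝ (Fin (n + 1))) g →
        (∀ x ∈ stdSimplex ℝ (Fin (n + 1)), g x ≤ f x) →
        ∀ c : ℝ, (∀ x ∈ stdSimplex ℝ (Fin (n + 1)), f x - g x ≤ c) →
          kappa n B ≤ c :=
  stmt16_general n B hB
end
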